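/- arXiv:1412.1702 — 2 statements merged into one kernel-verified Lean document; each statement's English description precedes it below -/
import Mathlib

section
/- Let a, b : ℤ → ℝ be bounded with a(n) > 0 for all n, and let J be the bounded self-adjoint operator on ℓ²(ℤ) determined by J e_n = a(n) e_{n−1} + b(n) e_n + a(n+1) e_{n+1}, where (e_n) is the standard orthonormal basis. Let ℓ²₊ be the closed span of {e_n : n ≥ 0}, ℓ²₋ its orthogonal complement, and J₊, J₋ the compressions of J to ℓ²₊ and ℓ²₋. Let c be a real number not in σ(J) ∪ σ(J₊) ∪ σ(J₋), and set r₊(c) = ⟨(J₊ − c)^{-1} e₀, e₀⟩. Then min{a(0)², 1}/(|c| + ‖J‖)² ≤ ‖(J₊ − c)^{-1} e₀‖² / (1 + r₊(c)²) ≤ max{a(0)², 1}/dist(c, σ(J))². -/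
open scoped InnerProductSpace

/-- The Hilbert space `ℓ²(ℤ)` (with complex scalars). -/
noncomputable abbrev Hsp : Type := lp (fun _ : ℤ => ℂ) 2

/-- The standard orthonormal basis vector `e_n` of `ℓ²(ℤ)`. -/
noncomputable def eZ (n : ℤ) : Hsp := lp.single 2 n 1

/-- The closed subspace `ℓ²₊`, the closed span of `{e_n : n ≥ 0}`. -/
noncomputable def Hplus : Submodule ℂ Hsp :=
  (Submodule.span ℂ {x : Hsp | ∃ n : ℤ, 0 ≤ n ∧ x = eZ n}).topologicalClosure

/-- The closed subspace `ℓ²₋ = ℓ² ⊖ ℓ²₊`, the closed span of `{e_n : n < 0}`. -/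
noncomputable def Hminus : Submodule ℂ Hsp :=
  (Submodule.span ℂ {x : Hsp | ∃ n : ℤ, n < 0 ∧ x = eZ n}).topologicalClosure

set_option maxHeartbeats 1000000
set_option synthInstance.maxHeartbeats 400000

open scoped Pointwise

lemma coord_eq (x : Hsp) (n : ℤ) : ⟪eZ n, x⟫_ℂ = x n := by
  simpa [RCLike.inner_apply, eZ] using lp.inner_single_left (𝕜 := ℂ) n (1 : ℂ) x

lemma coord_eq' (x : Hsp) (n : ℤ) : ⟪x, eZ n⟫_ℂ = (starRingEnd ℂ) (x n) := by
  simpa [RCLike.inner_apply, eZ] using lp.inner_single_right (𝕜 := ℂ) n (1 : ℂ) x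

lemma eZ_apply (n m : ℤ) : (eZ n) m = if m = n then 1 else 0 := by
  simp [eZ, lp.single_apply, Pi.single_apply]

lemma norm_eZ (n : ℤ) : ‖eZ n‖ = 1 := by
  have := lp.norm_single (p := 2) (E := fun _ : ℤ => ℂ) (by norm_num) n (1:ℂ)
  simpa [eZ] using this

lemma eZ_mem_Hplus {n : ℤ} (hn : 0 ≤ n) : eZ n ∈ Hplus :=
  Submodule.le_topologicalClosure _ (Submodule.subset_span ⟨n, hn, rfl⟩)

lemma Hplus_apply_neg {x : Hsp} (hx : x ∈ Hplus) {n : ℤ} (hn : n < 0) : x n = 0 := by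
  have hker : Hplus ≤ LinearMap.ker ((innerSL ℂ (eZ n)).toLinearMap) := by
    apply Submodule.topologicalClosure_minimal
    · rw [Submodule.span_le]
      rintro _ ⟨m, hm, rfl⟩
      simp only [SetLike.mem_coe, LinearMap.mem_ker, ContinuousLinearMap.coe_coe, innerSL_apply_apply]
      rw [coord_eq, eZ_apply, if_neg (by omega)]
    · exact ContinuousLinearMap.isClosed_ker _
  have := hker hx
  simp only [LinearMap.mem_ker, ContinuousLinearMap.coe_coe, innerSL_apply_apply] at this
  rwa [coord_eq] at this

/-- Let `J` be a two-sided Jacobi operator on `ℓ²(ℤ)` with bounded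
coefficients `a(n) > 0`, `b(n)`, and let `J₊`, `J₋` be its compressions to `ℓ²₊`, `ℓ²₋`.
For real `c ∉ σ(J) ∪ σ(J₊) ∪ σ(J₋)` and `r₊(c) = ⟨(J₊−c)⁻¹e₀, e₀⟩`:
`min{a(0)²,1}/(|c|+‖J‖)² ≤ ‖(J₊−c)⁻¹e₀‖²/(1+r₊(c)²) ≤ max{a(0)²,1}/dist(c,σ(J))²`. -/
theorem statement14
    (a b : ℤ → ℝ) (ha : ∀ n, 0 < a n)
    (hbdd : ∃ C : ℝ, ∀ n, |a n| ≤ C ∧ |b n| ≤ C)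
    (J : Hsp →L[ℂ] Hsp) (hJsa : IsSelfAdjoint J)
    (hJ : ∀ n : ℤ, J (eZ n) =
      (a n : ℂ) • eZ (n - 1) + (b n : ℂ) • eZ n + (a (n + 1) : ℂ) • eZ (n + 1))
    (Jp : Hplus →L[ℂ] Hplus)
    (hJp : ∀ x y : Hplus, ⟪(Jp x : Hsp), (y : Hsp)⟫_ℂ = ⟪J (x : Hsp), (y : Hsp)⟫_ℂ)
    (Jm : Hminus →L[ℂ] Hminus)
    (hJm : ∀ x y : Hminus, ⟪(Jm x : Hsp), (y : Hsp)⟫_ℂ = ⟪J (x : Hsp), (y : Hsp)⟫_ℂ)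
    (f0 : Hplus) (hf0 : (f0 : Hsp) = eZ 0)
    (c : ℝ)
    (hcJ : (c : ℂ) ∉ spectrum ℂ J) (hcJp : (c : ℂ) ∉ spectrum ℂ Jp)
    (hcJm : (c : ℂ) ∉ spectrum ℂ Jm)
    (r : ℝ) (hr : (r : ℂ) = ⟪(Ring.inverse (Jp - (c : ℂ) • 1)) f0, f0⟫_ℂ) :
    min (a 0 ^ 2) 1 / (|c| + ‖J‖) ^ 2 ≤
        ‖(Ring.inverse (Jp - (c : ℂ) • 1)) f0‖ ^ 2 / (1 + r ^ 2) ∧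
      ‖(Ring.inverse (Jp - (c : ℂ) • 1)) f0‖ ^ 2 / (1 + r ^ 2) ≤
        max (a 0 ^ 2) 1 / (Metric.infDist (c : ℂ) (spectrum ℂ J)) ^ 2 := by
  classical
  -- basic setup
  set u : Hplus := (Ring.inverse (Jp - (c : ℂ) • 1)) f0 with hu
  set uc : Hsp := (u : Hsp) with huc
  -- invertibility of Jp - c
  have hUnitP : IsUnit (Jp - (c : ℂ) • 1) := by
    have h1 := spectrum.notMem_iff.mp hcJp
    rw [Algebra.algebraMap_eq_smul_one] at h1
    simpa [neg_sub, -Complex.coe_smul] using h1.neg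
  have heq : (Jp - (c : ℂ) • 1) u = f0 := by
    have h1 : (Jp - (c : ℂ) • 1) * Ring.inverse (Jp - (c : ℂ) • 1) = 1 :=
      Ring.mul_inverse_cancel _ hUnitP
    calc (Jp - (c : ℂ) • 1) u
        = ((Jp - (c : ℂ) • 1) * Ring.inverse (Jp - (c : ℂ) • 1)) f0 := rfl
      _ = f0 := by rw [h1]; rfl
  have hcoe : (↑(Jp u) : Hsp) - (c : ℂ) • uc = eZ 0 := by
    have h2 := congrArg (Subtype.val) heq
    simpa [ContinuousLinearMap.sub_apply, ContinuousLinearMap.smul_apply,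
      ContinuousLinearMap.one_apply, hf0, -Complex.coe_smul] using h2
  -- coordinates of J x
  have hJcoord : ∀ (x : Hsp) (n : ℤ), (J x) n =
      (a n : ℂ) * x (n-1) + (b n : ℂ) * x n + (a (n+1) : ℂ) * x (n+1) := by
    intro x n
    calc (J x) n = ⟪eZ n, J x⟫_ℂ := (coord_eq _ _).symm
      _ = ⟪J (eZ n), x⟫_ℂ := (hJsa.isSymmetric (eZ n) x).symm
      _ = _ := by
          rw [hJ n, inner_add_left, inner_add_left, inner_smul_left, inner_smul_left,
            inner_smul_left, coord_eq, coord_eq, coord_eq]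
          simp [Complex.conj_ofReal]
  -- coordinates of Jp u agree with J uc for n ≥ 0
  have hJpco : ∀ n : ℤ, 0 ≤ n → (↑(Jp u) : Hsp) n = (J uc) n := by
    intro n hn
    have h2 := hJp u ⟨eZ n, eZ_mem_Hplus hn⟩
    have h3 := congrArg (starRingEnd ℂ) h2
    rw [← inner_conj_symm (𝕜 := ℂ), ← inner_conj_symm (𝕜 := ℂ) (J uc)] at h3
    simp only [RingHom.id_apply, starRingEnd_self_apply] at h3
    calc (↑(Jp u) : Hsp) n = ⟪eZ n, (↑(Jp u) : Hsp)⟫_ℂ := (coord_eq _ _).symm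
      _ = ⟪eZ n, J uc⟫_ℂ := h3
      _ = (J uc) n := coord_eq _ _
  -- support of uc
  have hsupp : ∀ n : ℤ, n < 0 → uc n = 0 := fun n hn => Hplus_apply_neg u.2 hn
  -- value at 0
  have hu0 : uc 0 = (r : ℂ) := by
    have h4 : (r : ℂ) = ⟪uc, eZ 0⟫_ℂ := by
      rw [hr]; rw [Submodule.coe_inner, hf0]
    rw [coord_eq'] at h4
    have h5 := congrArg (starRingEnd ℂ) h4
    simpa [Complex.conj_ofReal] using h5.symm
  -- the key vector identity
  set v : Hsp := J uc - (c : ℂ) • uc with hv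
  set w : Hsp := eZ 0 + ((a 0 * r : ℝ) : ℂ) • eZ (-1) with hw
  have hcoord : ∀ n : ℤ, (↑(Jp u) : Hsp) n - (c : ℂ) * uc n = (eZ 0) n := by
    intro n
    rw [← hcoe]
    simp [lp.coeFn_sub, lp.coeFn_smul, Pi.sub_apply, Pi.smul_apply, smul_eq_mul, -Complex.coe_smul]
    rfl
  have hvw : v = w := by
    apply lp.ext
    funext n
    have hvn : v n = (J uc) n - (c : ℂ) * uc n := by
      simp [hv, lp.coeFn_sub, lp.coeFn_smul, Pi.sub_apply, Pi.smul_apply, smul_eq_mul, -Complex.coe_smul]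
      rfl
    have hwn : w n = (eZ 0) n + ((a 0 * r : ℝ) : ℂ) * (eZ (-1)) n := by
      simp [hw, lp.coeFn_add, lp.coeFn_smul, Pi.add_apply, Pi.smul_apply, smul_eq_mul]
      rfl
    rcases le_or_gt 0 n with hn | hn
    · rw [hvn, hwn, ← hJpco n hn, hcoord n, eZ_apply (-1) n, if_neg (by omega)]
      ring
    · have h1 : uc n = 0 := hsupp n hn
      have h2 : uc (n-1) = 0 := hsupp _ (by omega)
      rcases eq_or_lt_of_le (show n ≤ -1 by omega) with hn1 | hn1
      · subst hn1
        rw [hvn, hwn, hJcoord, h1, h2]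
        rw [eZ_apply 0 (-1), if_neg (by omega), eZ_apply (-1) (-1), if_pos rfl]
        rw [show (-1:ℤ) + 1 = 0 by norm_num, hu0]
        push_cast
        ring
      · have h3 : uc (n+1) = 0 := hsupp _ (by omega)
        rw [hvn, hwn, hJcoord, h1, h2, h3]
        rw [eZ_apply 0 n, if_neg (by omega), eZ_apply (-1) n, if_neg (by omega)]
        ring
  -- norm of w
  have hip : ⟪eZ 0, ((a 0 * r : ℝ) : ℂ) • eZ (-1)⟫_ℂ = 0 := by
    rw [inner_smul_right, coord_eq, eZ_apply, if_neg (by omega), mul_zero]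
  have hnormw : ‖w‖ ^ 2 = 1 + (a 0 * r) ^ 2 := by
    rw [hw, @norm_add_sq ℂ, hip]
    rw [norm_smul, norm_eZ, norm_eZ, Complex.norm_real, Real.norm_eq_abs]
    simp [sq_abs, mul_pow]
  have hnormv : ‖v‖ ^ 2 = 1 + (a 0 * r) ^ 2 := by rw [hvw]; exact hnormw
  have hnu : ‖u‖ = ‖uc‖ := rfl
  have hrpos : (0:ℝ) < 1 + r ^ 2 := by positivity
  constructor
  · -- lower bound
    have hvle : ‖v‖ ≤ (|c| + ‖J‖) * ‖uc‖ := by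
      calc ‖v‖ ≤ ‖J uc‖ + ‖(c : ℂ) • uc‖ := norm_sub_le _ _
        _ ≤ ‖J‖ * ‖uc‖ + |c| * ‖uc‖ := by
            gcongr
            · exact J.le_opNorm uc
            · rw [norm_smul, Complex.norm_real, Real.norm_eq_abs]
        _ = (|c| + ‖J‖) * ‖uc‖ := by ring
    have hM : (0:ℝ) ≤ |c| + ‖J‖ := by positivity
    have hkey : 1 + (a 0 * r) ^ 2 ≤ (|c| + ‖J‖) ^ 2 * ‖uc‖ ^ 2 := by
      rw [← hnormv, ← mul_pow]
      exact pow_le_pow_left₀ (norm_nonneg _) hvle 2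
    have hMpos : (0:ℝ) < |c| + ‖J‖ := by
      rcases eq_or_lt_of_le hM with h | h
      · exfalso
        rw [← h] at hkey
        nlinarith [hkey, sq_nonneg (a 0 * r)]
      · exact h
    rw [hnu, div_le_div_iff₀ (by positivity) hrpos]
    have hmin1 : min (a 0 ^ 2) 1 ≤ 1 := min_le_right _ _
    have hmin2 : min (a 0 ^ 2) 1 ≤ a 0 ^ 2 := min_le_left _ _
    nlinarith [sq_nonneg r, sq_nonneg (a 0 * r), mul_le_mul_of_nonneg_right hmin2 (sq_nonneg r)]
  · -- upper bound
    set d : ℝ := Metric.infDist (c : ℂ) (spectrum ℂ J) with hd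
    haveI : Nontrivial Hsp := by
      refine ⟨eZ 0, 0, fun h => ?_⟩
      have := norm_eZ 0
      rw [h, norm_zero] at this
      norm_num at this
    have hUnit : IsUnit (J - (c : ℂ) • 1) := by
      have h1 := spectrum.notMem_iff.mp hcJ
      rw [Algebra.algebraMap_eq_smul_one] at h1
      simpa [neg_sub, -Complex.coe_smul] using h1.neg
    have hdpos : 0 < d :=
      ((spectrum.isClosed (𝕜 := ℂ) J).notMem_iff_infDist_pos (spectrum.nonempty J)).mp hcJ
    set A : Hsp →L[ℂ] Hsp := Ring.inverse (J - (c : ℂ) • 1) with hA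
    have hsubsa : IsSelfAdjoint (J - (c : ℂ) • 1) := by
      refine hJsa.sub ?_
      rw [IsSelfAdjoint, star_smul, star_one]
      norm_num [Complex.conj_ofReal]
    have h1 : A * (J - (c : ℂ) • 1) = 1 := Ring.inverse_mul_cancel _ hUnit
    have h2 : (J - (c : ℂ) • 1) * A = 1 := Ring.mul_inverse_cancel _ hUnit
    have hAsa : IsSelfAdjoint A := by
      rw [IsSelfAdjoint]
      calc star A = star A * ((J - (c : ℂ) • 1) * A) := by rw [h2, mul_one]
        _ = (star A * star (J - (c : ℂ) • 1)) * A := by rw [hsubsa.star_eq, mul_assoc]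
        _ = star ((J - (c : ℂ) • 1) * A) * A := by rw [star_mul]
        _ = A := by rw [h2, star_one, one_mul]
    obtain ⟨U, hU⟩ := hUnit
    have hUnit' : IsUnit (J - (c : ℂ) • 1) := ⟨U, hU⟩
    have hAU : A = ↑U⁻¹ := by rw [hA, ← hU, Ring.inverse_unit]
    have hspec : spectrum ℂ (J - (c : ℂ) • 1) = spectrum ℂ J - ({(c : ℂ)} : Set ℂ) := by
      have h7 := spectrum.sub_singleton_eq (R := ℂ) J (c : ℂ)
      rw [Algebra.algebraMap_eq_smul_one] at h7
      exact h7.symm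
    have hkbound : ∀ k ∈ spectrum ℂ A, ‖k‖ ≤ 1 / d := by
      intro k hk
      rw [hAU, ← spectrum.map_inv, Set.mem_inv, hU, hspec] at hk
      rw [Set.mem_sub] at hk
      obtain ⟨lam, hlam, y, hy, hsub⟩ := hk
      rw [Set.mem_singleton_iff] at hy
      subst hy
      by_cases hk0 : k = 0
      · rw [hk0, norm_zero]; positivity
      · have h5 : d ≤ ‖k‖⁻¹ := by
          calc d ≤ dist (c : ℂ) lam := Metric.infDist_le_dist_of_mem hlam
            _ = ‖lam - (c : ℂ)‖ := by rw [dist_eq_norm, norm_sub_rev]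
            _ = ‖k⁻¹‖ := by rw [hsub]
            _ = ‖k‖⁻¹ := norm_inv k
        rw [le_div_iff₀ hdpos]
        have hkn : ‖k‖ ≠ 0 := norm_ne_zero_iff.mpr hk0
        calc ‖k‖ * d ≤ ‖k‖ * ‖k‖⁻¹ := by
              exact mul_le_mul_of_nonneg_left h5 (norm_nonneg k)
          _ = 1 := mul_inv_cancel₀ hkn
    have hDnn : (0:ℝ) ≤ 1 / d := by positivity
    have hsr : spectralRadius ℂ A ≤ ENNReal.ofReal (1 / d) := by
      refine iSup₂_le fun k hk => ?_
      rw [← enorm_eq_nnnorm, ← ofReal_norm]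
      exact ENNReal.ofReal_le_ofReal (hkbound k hk)
    have hnA : ‖A‖ ≤ 1 / d := by
      rw [hAsa.spectralRadius_eq_nnnorm, ← enorm_eq_nnnorm, ← ofReal_norm] at hsr
      exact (ENNReal.ofReal_le_ofReal_iff hDnn).mp hsr
    have hucAv : uc = A v := by
      have h6 : (J - (c : ℂ) • 1) uc = v := by
        simp [hv, ContinuousLinearMap.sub_apply, ContinuousLinearMap.smul_apply,
          ContinuousLinearMap.one_apply, -Complex.coe_smul]
      calc uc = (A * (J - (c : ℂ) • 1)) uc := by
            rw [h1, ContinuousLinearMap.one_apply]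
        _ = A ((J - (c : ℂ) • 1) uc) := ContinuousLinearMap.mul_apply _ _ _
        _ = A v := by rw [h6]
    have hule : ‖uc‖ ≤ (1 / d) * ‖v‖ := by
      rw [hucAv]
      calc ‖A v‖ ≤ ‖A‖ * ‖v‖ := A.le_opNorm v
        _ ≤ (1 / d) * ‖v‖ := mul_le_mul_of_nonneg_right hnA (norm_nonneg v)
    have hkey2 : ‖uc‖ ^ 2 * d ^ 2 ≤ 1 + (a 0 * r) ^ 2 := by
      rw [← hnormv]
      have h8 : ‖uc‖ ^ 2 ≤ ((1 / d) * ‖v‖) ^ 2 := pow_le_pow_left₀ (norm_nonneg uc) hule 2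
      calc ‖uc‖ ^ 2 * d ^ 2 ≤ ((1 / d) * ‖v‖) ^ 2 * d ^ 2 :=
            mul_le_mul_of_nonneg_right h8 (by positivity)
        _ = ‖v‖ ^ 2 * ((1 / d) ^ 2 * d ^ 2) := by ring
        _ = ‖v‖ ^ 2 := by
            rw [div_pow, one_pow, div_mul_cancel₀]
            · rw [mul_one]
            · positivity
    clear_value u uc v w A d
    rw [hnu, div_le_div_iff₀ hrpos (pow_pos hdpos 2)]
    have hmax1 : (1:ℝ) ≤ max (a 0 ^ 2) 1 := le_max_right _ _
    have hmax2 : a 0 ^ 2 ≤ max (a 0 ^ 2) 1 := le_max_left _ _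
    have hfin := mul_le_mul_of_nonneg_right hmax2 (sq_nonneg r)
    calc ‖uc‖ ^ 2 * d ^ 2 ≤ 1 + (a 0 * r) ^ 2 := hkey2
      _ = 1 + a 0 ^ 2 * r ^ 2 := by ring
      _ ≤ max (a 0 ^ 2) 1 * 1 + max (a 0 ^ 2) 1 * r ^ 2 := by
          rw [mul_one]; exact add_le_add hmax1 hfin
      _ = max (a 0 ^ 2) 1 * (1 + r ^ 2) := by ring
end

section
/- Let g ≥ 1, let f : ℝ^g → ℝ be Lipschitz continuous, let μ ∈ ℝ^g, let 0 < η < 1, let ε_α : ℕ → ℝ^g with Σ_{n≥0} ‖ε_α(n)‖² < ∞, and let ε_b : ℕ → ℝ with Σ_{n≥0} ε_b(n)² < ∞. Define α_n = Σ_{k=0}^{n} ε_α(k) − nμ and b(n) = f(α_n) + ε_b(n) for n ≥ 0. Then Σ_{n≥0} Σ_{k≥0} | b(n+k) − f(α_n − kμ) |² η^{2k} < ∞. -/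
set_option maxHeartbeats 1000000 in
/-- Let `f : ℝ^g → ℝ` be Lipschitz, `μ ∈ ℝ^g`, `0 < η < 1`,
`ε_α ∈ ℓ²(ℕ, ℝ^g)`, `ε_b ∈ ℓ²(ℕ, ℝ)`. With `α_n = Σ_{k=0}^{n} ε_α(k) − nμ` and
`b(n) = f(α_n) + ε_b(n)`, one has
`Σ_{n≥0} Σ_{k≥0} |b(n+k) − f(α_n − kμ)|² η^{2k} < ∞`. -/
theorem statement18 (g : ℕ) (hg : 1 ≤ g) (K : NNReal)
    (f : EuclideanSpace ℝ (Fin g) → ℝ) (hf : LipschitzWith K f)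
    (μ : EuclideanSpace ℝ (Fin g)) (η : ℝ) (hη0 : 0 < η) (hη1 : η < 1)
    (εa : ℕ → EuclideanSpace ℝ (Fin g)) (hεa : Summable fun n => ‖εa n‖ ^ 2)
    (εb : ℕ → ℝ) (hεb : Summable fun n => εb n ^ 2)
    (α : ℕ → EuclideanSpace ℝ (Fin g))
    (hα : ∀ n, α n = (∑ k ∈ Finset.range (n + 1), εa k) - (n : ℝ) • μ)
    (b : ℕ → ℝ) (hb : ∀ n, b n = f (α n) + εb n) :
    Summable fun nk : ℕ × ℕ =>
      |b (nk.1 + nk.2) - f (α nk.1 - (nk.2 : ℝ) • μ)| ^ 2 * η ^ (2 * nk.2) := by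
  set Sa := ∑' n, ‖εa n‖ ^ 2 with hSa_def
  set Sb := ∑' n, εb n ^ 2 with hSb_def
  have hSa0 : 0 ≤ Sa := tsum_nonneg fun n => sq_nonneg _
  have hSb0 : 0 ≤ Sb := tsum_nonneg fun n => sq_nonneg _
  have hη2 : η ^ 2 < 1 := by nlinarith
  have hη2' : (0:ℝ) ≤ η ^ 2 := sq_nonneg η
  -- difference of alphas
  have hv : ∀ n k : ℕ, α (n + k) - (α n - (k : ℝ) • μ)
      = ∑ i ∈ Finset.range k, εa (n + 1 + i) := by
    intro n k
    have h2 : (∑ j ∈ Finset.range (n + k + 1), εa j)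
        - ∑ j ∈ Finset.range (n + 1), εa j
        = ∑ i ∈ Finset.range k, εa (n + 1 + i) := by
      rw [← Finset.sum_Ico_eq_sub _ (by omega), Finset.sum_Ico_eq_sum_range]
      simp
    rw [hα, hα, ← h2]
    push_cast [add_smul]
    abel
  -- pointwise key inequality
  have key : ∀ n k : ℕ,
      |b (n + k) - f (α n - (k : ℝ) • μ)| ^ 2 ≤
        2 * (K:ℝ) ^ 2 * k * (∑ i ∈ Finset.range k, ‖εa (n + 1 + i)‖ ^ 2)
          + 2 * εb (n + k) ^ 2 := by
    intro n k
    set Δ := f (α (n + k)) - f (α n - (k : ℝ) • μ) with hΔ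
    have hd : |Δ| ≤ K * ‖∑ i ∈ Finset.range k, εa (n + 1 + i)‖ := by
      have := hf.dist_le_mul (α (n + k)) (α n - (k : ℝ) • μ)
      rwa [Real.dist_eq, dist_eq_norm, hv n k] at this
    have hns : ‖∑ i ∈ Finset.range k, εa (n + 1 + i)‖
        ≤ ∑ i ∈ Finset.range k, ‖εa (n + 1 + i)‖ := norm_sum_le _ _
    have hcs : (∑ i ∈ Finset.range k, ‖εa (n + 1 + i)‖) ^ 2
        ≤ k * ∑ i ∈ Finset.range k, ‖εa (n + 1 + i)‖ ^ 2 := by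
      simpa using sq_sum_le_card_mul_sum_sq (s := Finset.range k)
        (f := fun i => ‖εa (n + 1 + i)‖)
    have hb' : b (n + k) - f (α n - (k : ℝ) • μ) = Δ + εb (n + k) := by
      rw [hb]; ring
    rw [hb', sq_abs]
    have hΔ2 : Δ ^ 2 ≤ (K:ℝ) ^ 2 * (k * ∑ i ∈ Finset.range k, ‖εa (n + 1 + i)‖ ^ 2) := by
      have h1 : Δ ^ 2 ≤ ((K:ℝ) * ‖∑ i ∈ Finset.range k, εa (n + 1 + i)‖) ^ 2 := by
        rw [← sq_abs Δ]
        exact pow_le_pow_left₀ (abs_nonneg _) hd 2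
      have h2 : ‖∑ i ∈ Finset.range k, εa (n + 1 + i)‖ ^ 2
          ≤ (∑ i ∈ Finset.range k, ‖εa (n + 1 + i)‖) ^ 2 :=
        pow_le_pow_left₀ (norm_nonneg _) hns 2
      calc Δ ^ 2 ≤ (K:ℝ) ^ 2 * ‖∑ i ∈ Finset.range k, εa (n + 1 + i)‖ ^ 2 := by
              simpa [mul_pow] using h1
        _ ≤ (K:ℝ) ^ 2 * (∑ i ∈ Finset.range k, ‖εa (n + 1 + i)‖) ^ 2 :=
              mul_le_mul_of_nonneg_left h2 (by positivity)
        _ ≤ (K:ℝ) ^ 2 * (k * ∑ i ∈ Finset.range k, ‖εa (n + 1 + i)‖ ^ 2) :=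
              mul_le_mul_of_nonneg_left hcs (by positivity)
    nlinarith [sq_nonneg (Δ - εb (n + k)), hΔ2]
  -- summability pieces
  have hinj : ∀ i : ℕ, Function.Injective fun n : ℕ => n + 1 + i :=
    fun i => (add_left_injective i).comp (add_left_injective 1)
  have hsa : ∀ i : ℕ, Summable fun n => ‖εa (n + 1 + i)‖ ^ 2 :=
    fun i => hεa.comp_injective (hinj i)
  have hsumk : ∀ k : ℕ, Summable fun n => ∑ i ∈ Finset.range k, ‖εa (n + 1 + i)‖ ^ 2 :=
    fun k => summable_sum fun i _ => hsa i
  have hsb : ∀ k : ℕ, Summable fun n => εb (n + k) ^ 2 :=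
    fun k => hεb.comp_injective (add_left_injective k)
  have htsa : ∀ k : ℕ, (∑' n, ∑ i ∈ Finset.range k, ‖εa (n + 1 + i)‖ ^ 2) ≤ k * Sa := by
    intro k
    have heach : ∀ i : ℕ, (∑' n, ‖εa (n + 1 + i)‖ ^ 2) ≤ Sa := fun i =>
      Summable.tsum_le_tsum_of_inj (fun n => n + 1 + i) (hinj i) (fun c _ => sq_nonneg _)
        (fun n => le_rfl) (hsa i) hεa
    calc (∑' n, ∑ i ∈ Finset.range k, ‖εa (n + 1 + i)‖ ^ 2)
        = ∑ i ∈ Finset.range k, ∑' n, ‖εa (n + 1 + i)‖ ^ 2 :=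
          Summable.tsum_finsetSum fun i _ => hsa i
      _ ≤ ∑ i ∈ Finset.range k, Sa := Finset.sum_le_sum fun i _ => heach i
      _ = k * Sa := by rw [Finset.sum_const, Finset.card_range, nsmul_eq_mul]
  have htsb : ∀ k : ℕ, (∑' n, εb (n + k) ^ 2) ≤ Sb := fun k =>
    Summable.tsum_le_tsum_of_inj (· + k) (add_left_injective k) (fun c _ => sq_nonneg _)
      (fun n => le_rfl) (hsb k) hεb
  -- summability of the swapped majorant
  have hswap : Summable fun kn : ℕ × ℕ =>
      (2 * (K:ℝ) ^ 2 * kn.1 * (∑ i ∈ Finset.range kn.1, ‖εa (kn.2 + 1 + i)‖ ^ 2)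
        + 2 * εb (kn.2 + kn.1) ^ 2) * η ^ (2 * kn.1) := by
    have hnn : ∀ p : ℕ × ℕ,
        (0:ℝ) ≤ (2 * (K:ℝ) ^ 2 * p.1 * (∑ i ∈ Finset.range p.1, ‖εa (p.2 + 1 + i)‖ ^ 2)
          + 2 * εb (p.2 + p.1) ^ 2) * η ^ (2 * p.1) := fun p =>
      mul_nonneg (by positivity) (pow_nonneg hη0.le _)
    refine (summable_prod_of_nonneg hnn).mpr ⟨fun k => ?_, ?_⟩
    · show Summable fun n : ℕ =>
        (2 * (K:ℝ) ^ 2 * k * (∑ i ∈ Finset.range k, ‖εa (n + 1 + i)‖ ^ 2)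
          + 2 * εb (n + k) ^ 2) * η ^ (2 * k)
      exact ((((hsumk k).mul_left _).add ((hsb k).mul_left 2)).mul_right _)
    · show Summable fun k : ℕ => ∑' n : ℕ,
        (2 * (K:ℝ) ^ 2 * k * (∑ i ∈ Finset.range k, ‖εa (n + 1 + i)‖ ^ 2)
          + 2 * εb (n + k) ^ 2) * η ^ (2 * k)
      have hgeo1 : Summable fun k : ℕ => (2 * (K:ℝ) ^ 2 * Sa) * ((k:ℝ) ^ 2 * (η ^ 2) ^ k) := by
        refine Summable.mul_left _ ?_
        have hn : ‖η ^ 2‖ < 1 := by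
          rw [Real.norm_eq_abs, abs_of_nonneg hη2']; exact hη2
        exact summable_pow_mul_geometric_of_norm_lt_one 2 hn
      have hgeo2 : Summable fun k : ℕ => (2 * Sb) * (η ^ 2) ^ k :=
        (summable_geometric_of_lt_one hη2' hη2).mul_left _
      refine Summable.of_nonneg_of_le
        (fun k => tsum_nonneg fun n => mul_nonneg (by positivity) (pow_nonneg hη0.le _))
        (fun k => ?_) (hgeo1.add hgeo2)
      have hterm : ∀ n : ℕ,
          (2 * (K:ℝ) ^ 2 * k * (∑ i ∈ Finset.range k, ‖εa (n + 1 + i)‖ ^ 2)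
            + 2 * εb (n + k) ^ 2) * η ^ (2 * k)
          = 2 * (K:ℝ) ^ 2 * k * (∑ i ∈ Finset.range k, ‖εa (n + 1 + i)‖ ^ 2) * η ^ (2 * k)
            + 2 * εb (n + k) ^ 2 * η ^ (2 * k) := fun n => by ring
      calc (∑' n, (2 * (K:ℝ) ^ 2 * k * (∑ i ∈ Finset.range k, ‖εa (n + 1 + i)‖ ^ 2)
              + 2 * εb (n + k) ^ 2) * η ^ (2 * k))
          = (∑' n, 2 * (K:ℝ) ^ 2 * k * (∑ i ∈ Finset.range k, ‖εa (n + 1 + i)‖ ^ 2)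
              * η ^ (2 * k)) + ∑' n, 2 * εb (n + k) ^ 2 * η ^ (2 * k) := by
            simp_rw [hterm]
            exact Summable.tsum_add (((hsumk k).mul_left _).mul_right _)
              (((hsb k).mul_left 2).mul_right _)
        _ = 2 * (K:ℝ) ^ 2 * k * (∑' n, ∑ i ∈ Finset.range k, ‖εa (n + 1 + i)‖ ^ 2)
              * η ^ (2 * k) + 2 * (∑' n, εb (n + k) ^ 2) * η ^ (2 * k) := by
            rw [tsum_mul_right, tsum_mul_left, tsum_mul_right, tsum_mul_left]
        _ ≤ 2 * (K:ℝ) ^ 2 * k * (k * Sa) * η ^ (2 * k)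
              + 2 * Sb * η ^ (2 * k) := by
            have h0 : (0:ℝ) ≤ η ^ (2 * k) := pow_nonneg hη0.le _
            have h1 : (0:ℝ) ≤ 2 * (K:ℝ) ^ 2 * k := by positivity
            exact add_le_add
              (mul_le_mul_of_nonneg_right (mul_le_mul_of_nonneg_left (htsa k) h1) h0)
              (mul_le_mul_of_nonneg_right (by nlinarith [htsb k]) h0)
        _ = (2 * (K:ℝ) ^ 2 * Sa) * ((k:ℝ) ^ 2 * (η ^ 2) ^ k) + (2 * Sb) * (η ^ 2) ^ k := by
            rw [← pow_mul]; ring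
  have hmaj : Summable fun nk : ℕ × ℕ =>
      (2 * (K:ℝ) ^ 2 * nk.2 * (∑ i ∈ Finset.range nk.2, ‖εa (nk.1 + 1 + i)‖ ^ 2)
        + 2 * εb (nk.1 + nk.2) ^ 2) * η ^ (2 * nk.2) :=
    (Equiv.prodComm ℕ ℕ).summable_iff.2 hswap
  refine Summable.of_nonneg_of_le
    (fun nk => mul_nonneg (by positivity) (pow_nonneg hη0.le _)) (fun nk => ?_) hmaj
  exact mul_le_mul_of_nonneg_right (key nk.1 nk.2) (pow_nonneg hη0.le _)
end
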